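/- arXiv:1208.4993 — 3 statements merged into one kernel-verified Lean document; each statement's English description precedes it below -/
import Mathlib

section
/- For all MTL formulas φ, χ, θ and every rational q > 0, the following equivalence holds over all signals: θ U_{(0,q)} (■ φ ∧ χ) ↔ (θ U_{(0,q)} (■_{(0,q)} φ ∧ χ)) ∧ ■ φ. -/
open scoped NNRat

/-- An interval `I ⊆ (0,∞)` with endpoints in `ℚ≥0 ∪ {∞}`, used to constrain
MTL temporal operators.  `lo` is the left endpoint, `hi` the right endpoint
(`⊤` meaning `∞`), and the two Booleans record whether the corresponding
endpoint is included. -/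
structure MTLIv where
  lo : ℚ≥0
  hi : WithTop ℚ≥0
  loClosed : Bool
  hiClosed : Bool

namespace MTLIv

/-- Membership of a real number in the interval (intersected with `(0,∞)`). -/
def mem (I : MTLIv) (t : ℝ) : Prop :=
  0 < t ∧
  (if I.loClosed then (I.lo : ℝ) ≤ t else (I.lo : ℝ) < t) ∧
  (∀ q : ℚ≥0, I.hi = (q : WithTop ℚ≥0) →
    (if I.hiClosed then t ≤ (q : ℝ) else t < (q : ℝ)))

/-- An interval is bounded if its right endpoint is not `∞`. -/
def Bounded (I : MTLIv) : Prop := I.hi ≠ ⊤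

/-- Scaling an interval by a positive rational: `r • I = {r·t : t ∈ I}`. -/
def scale (r : ℚ≥0) (I : MTLIv) : MTLIv :=
  ⟨r * I.lo, I.hi.map (fun q => r * q), I.loClosed, I.hiClosed⟩

end MTLIv

/-- The interval `(0,∞)`. -/
def ivInf : MTLIv := ⟨0, ⊤, false, false⟩
/-- The interval `(0,q)`. -/
def ivLT (q : ℚ≥0) : MTLIv := ⟨0, (q : WithTop ℚ≥0), false, false⟩
/-- The singleton interval `{q}`. -/
def ivEQ (q : ℚ≥0) : MTLIv := ⟨q, (q : WithTop ℚ≥0), true, true⟩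
/-- The open interval `(p,q)`. -/
def ivOO (p q : ℚ≥0) : MTLIv := ⟨p, (q : WithTop ℚ≥0), false, false⟩

/-- Formulas of Metric Temporal Logic over atomic propositions `P`:
`φ ::= true | p | φ ∧ φ | ¬φ | φ U_I φ | φ S_I φ`.
In `until I φ ψ` (i.e. `φ U_I ψ`) the witness formula is `ψ`, and similarly
for `since`. -/
inductive MTL (P : Type*) where
  | tt : MTL P
  | atom : P → MTL P
  | and : MTL P → MTL P → MTL P
  | not : MTL P → MTL P
  | until : MTLIv → MTL P → MTL P → MTL P
  | since : MTLIv → MTL P → MTL P → MTL P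

namespace MTL

variable {P : Type*}

/-- Satisfaction of an MTL formula by a signal `f : ℝ → Set P` at time `r`. -/
def sat (f : ℝ → Set P) : MTL P → ℝ → Prop
  | .tt, _ => True
  | .atom p, r => p ∈ f r
  | .and φ ψ, r => φ.sat f r ∧ ψ.sat f r
  | .not φ, r => ¬ φ.sat f r
  | .until I φ ψ, r =>
      ∃ t, r < t ∧ I.mem (t - r) ∧ ψ.sat f t ∧ ∀ u, r < u → u < t → φ.sat f u
  | .since I φ ψ, r =>
      ∃ t, t < r ∧ I.mem (r - t) ∧ ψ.sat f t ∧ ∀ u, t < u → u < r → φ.sat f u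

/-- Two MTL formulas are equivalent if they are satisfied by exactly the same
pairs (signal, time point). -/
def Equiv (φ ψ : MTL P) : Prop :=
  ∀ (f : ℝ → Set P) (r : ℝ), φ.sat f r ↔ ψ.sat f r

/-- Disjunction, as a derived connective. -/
def or (φ ψ : MTL P) : MTL P := .not (.and (.not φ) (.not ψ))

/-- `◇_I φ := true U_I φ`. -/
def dia (I : MTLIv) (φ : MTL P) : MTL P := .until I .tt φ

/-- `□_I φ := ¬◇_I ¬φ`. -/
def box (I : MTLIv) (φ : MTL P) : MTL P := .not (dia I (.not φ))

/-- `◆_I φ := true S_I φ`. -/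
def pdia (I : MTLIv) (φ : MTL P) : MTL P := .since I .tt φ

/-- `■_I φ := ¬◆_I ¬φ`. -/
def pbox (I : MTLIv) (φ : MTL P) : MTL P := .not (pdia I (.not φ))

/-- `K⁺φ := ¬((¬φ) U true)`. -/
def kplus (φ : MTL P) : MTL P := .not (.until ivInf (.not φ) .tt)

/-- A formula is bounded if all intervals occurring in its temporal
operators are bounded. -/
def Bounded : MTL P → Prop
  | .tt => True
  | .atom _ => True
  | .and φ ψ => φ.Bounded ∧ ψ.Bounded
  | .not φ => φ.Bounded
  | .until I φ ψ => I.Bounded ∧ φ.Bounded ∧ ψ.Bounded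
  | .since I φ ψ => I.Bounded ∧ φ.Bounded ∧ ψ.Bounded

/-- All `S_I` operators occurring in the formula are bounded
(`U_I` operators are unrestricted). -/
def SinceOpsBounded : MTL P → Prop
  | .tt => True
  | .atom _ => True
  | .and φ ψ => φ.SinceOpsBounded ∧ ψ.SinceOpsBounded
  | .not φ => φ.SinceOpsBounded
  | .until _ φ ψ => φ.SinceOpsBounded ∧ ψ.SinceOpsBounded
  | .since I φ ψ => I.Bounded ∧ φ.SinceOpsBounded ∧ ψ.SinceOpsBounded

/-- All `U_I` operators occurring in the formula are bounded
(`S_I` operators are unrestricted). -/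
def UntilOpsBounded : MTL P → Prop
  | .tt => True
  | .atom _ => True
  | .and φ ψ => φ.UntilOpsBounded ∧ ψ.UntilOpsBounded
  | .not φ => φ.UntilOpsBounded
  | .until I φ ψ => I.Bounded ∧ φ.UntilOpsBounded ∧ ψ.UntilOpsBounded
  | .since _ φ ψ => φ.UntilOpsBounded ∧ ψ.UntilOpsBounded

/-- No unbounded temporal operator occurs within the scope of a bounded
temporal operator. -/
def NoUnboundedInBounded : MTL P → Prop
  | .tt => True
  | .atom _ => True
  | .and φ ψ => φ.NoUnboundedInBounded ∧ ψ.NoUnboundedInBounded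
  | .not φ => φ.NoUnboundedInBounded
  | .until I φ ψ => (I.Bounded → φ.Bounded ∧ ψ.Bounded) ∧
      φ.NoUnboundedInBounded ∧ ψ.NoUnboundedInBounded
  | .since I φ ψ => (I.Bounded → φ.Bounded ∧ ψ.Bounded) ∧
      φ.NoUnboundedInBounded ∧ ψ.NoUnboundedInBounded

/-- The future-reach of an MTL formula, with values in `ℚ≥0 ∪ {∞}`. -/
def fr : MTL P → WithTop ℚ≥0
  | .tt => 0
  | .atom _ => 0
  | .and φ ψ => max φ.fr ψ.fr
  | .not φ => φ.fr
  | .until I φ ψ => I.hi + max φ.fr ψ.fr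
  | .since I φ ψ => max φ.fr (ψ.fr.map (fun a => a - I.lo))

/-- The past-reach of an MTL formula, with values in `ℚ≥0 ∪ {∞}`. -/
def pr : MTL P → WithTop ℚ≥0
  | .tt => 0
  | .atom _ => 0
  | .and φ ψ => max φ.pr ψ.pr
  | .not φ => φ.pr
  | .since I φ ψ => I.hi + max φ.pr ψ.pr
  | .until I φ ψ => max φ.pr (ψ.pr.map (fun a => a - I.lo))

/-- Boolean combinations of formulas from the class `C`. -/
inductive BoolComb (C : MTL P → Prop) : MTL P → Prop
  | base {φ} : C φ → BoolComb C φ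
  | tt : BoolComb C .tt
  | and {φ ψ} : BoolComb C φ → BoolComb C ψ → BoolComb C (.and φ ψ)
  | not {φ} : BoolComb C φ → BoolComb C (.not φ)

/-- Scaling an MTL formula by a positive rational: every constraining
interval `I` is replaced by `rI`. -/
def scale (r : ℚ≥0) : MTL P → MTL P
  | .tt => .tt
  | .atom p => .atom p
  | .and φ ψ => .and (φ.scale r) (ψ.scale r)
  | .not φ => .not (φ.scale r)
  | .until I φ ψ => .until (I.scale r) (φ.scale r) (ψ.scale r)
  | .since I φ ψ => .since (I.scale r) (φ.scale r) (ψ.scale r)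

end MTL

/-- Terms of QMLO: `t ::= x | t + q` with `q ∈ ℚ` (variables are
represented by natural numbers). -/
inductive QTerm where
  | var : ℕ → QTerm
  | add : QTerm → ℚ → QTerm

namespace QTerm

/-- Value of a term under a valuation of the variables. -/
def val (v : ℕ → ℝ) : QTerm → ℝ
  | .var x => v x
  | .add t q => t.val v + (q : ℝ)

/-- The (unique) variable occurring in a term. -/
def fvar : QTerm → ℕ
  | .var x => x
  | .add t _ => t.fvar

/-- Every shift in the term is `+1`; these are exactly the terms of
`FO(<,+1)`. -/
def OnlyPlusOne : QTerm → Prop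
  | .var _ => True
  | .add t q => q = 1 ∧ t.OnlyPlusOne

/-- Every shift in the term is an integer. -/
def IntShifts : QTerm → Prop
  | .var _ => True
  | .add t q => q.den = 1 ∧ t.IntShifts

/-- The term uses no `+q` function at all (terms of `FO(<)`). -/
def NoShifts : QTerm → Prop
  | .var _ => True
  | .add _ _ => False

/-- Substitution of the term `s` for the variable `y`. -/
def subst (y : ℕ) (s : QTerm) : QTerm → QTerm
  | .var z => if z = y then s else .var z
  | .add t q => .add (subst y s t) q

end QTerm

/-- Formulas of QMLO, the monadic logic of order and metric: first-order
logic with `<`, monadic predicates drawn from `P`, and `+q` (`q ∈ ℚ`). -/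
inductive QMLO (P : Type*) where
  | tt : QMLO P
  | pred : P → QTerm → QMLO P
  | lt : QTerm → QTerm → QMLO P
  | and : QMLO P → QMLO P → QMLO P
  | not : QMLO P → QMLO P
  | ex : ℕ → QMLO P → QMLO P

namespace QMLO

variable {P : Type*}

/-- Satisfaction of a QMLO formula over the reals, by a signal
`f : ℝ → Set P` and a valuation `v` of the variables. -/
def sat (f : ℝ → Set P) : QMLO P → (ℕ → ℝ) → Prop
  | .tt, _ => True
  | .pred p t, v => p ∈ f (t.val v)
  | .lt t₁ t₂, v => t₁.val v < t₂.val v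
  | .and φ ψ, v => φ.sat f v ∧ ψ.sat f v
  | .not φ, v => ¬ φ.sat f v
  | .ex x φ, v => ∃ r : ℝ, φ.sat f (Function.update v x r)

/-- The free variables of a QMLO formula. -/
def freeVars : QMLO P → Set ℕ
  | .tt => ∅
  | .pred _ t => {t.fvar}
  | .lt t₁ t₂ => {t₁.fvar, t₂.fvar}
  | .and φ ψ => φ.freeVars ∪ ψ.freeVars
  | .not φ => φ.freeVars
  | .ex x φ => φ.freeVars \ {x}

/-- All terms use only the `+1` function: the formula belongs to
`FO(<,+1)`. -/
def OnlyPlusOne : QMLO P → Prop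
  | .tt => True
  | .pred _ t => t.OnlyPlusOne
  | .lt t₁ t₂ => t₁.OnlyPlusOne ∧ t₂.OnlyPlusOne
  | .and φ ψ => φ.OnlyPlusOne ∧ ψ.OnlyPlusOne
  | .not φ => φ.OnlyPlusOne
  | .ex _ φ => φ.OnlyPlusOne

/-- All shifts occurring in the formula are integers: the formula belongs to
`FO(<,+1)` up to the standard arithmetical shorthand. -/
def IntShifts : QMLO P → Prop
  | .tt => True
  | .pred _ t => t.IntShifts
  | .lt t₁ t₂ => t₁.IntShifts ∧ t₂.IntShifts
  | .and φ ψ => φ.IntShifts ∧ ψ.IntShifts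
  | .not φ => φ.IntShifts
  | .ex _ φ => φ.IntShifts

/-- The formula uses no `+q` function at all: it belongs to `FO(<)`. -/
def NoShifts : QMLO P → Prop
  | .tt => True
  | .pred _ t => t.NoShifts
  | .lt t₁ t₂ => t₁.NoShifts ∧ t₂.NoShifts
  | .and φ ψ => φ.NoShifts ∧ ψ.NoShifts
  | .not φ => φ.NoShifts
  | .ex _ φ => φ.NoShifts

/-- Substitution of the term `s` for the free occurrences of variable `y`. -/
def subst (y : ℕ) (s : QTerm) : QMLO P → QMLO P
  | .tt => .tt
  | .pred p t => .pred p (t.subst y s)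
  | .lt t₁ t₂ => .lt (t₁.subst y s) (t₂.subst y s)
  | .and φ ψ => .and (subst y s φ) (subst y s ψ)
  | .not φ => .not (subst y s φ)
  | .ex z φ => .ex z (if z = y then φ else subst y s φ)

/-- Scaling of a QMLO formula by a rational `r`: every function symbol `+q`
is replaced by `+(r·q)`. -/
def scale (r : ℚ) : QMLO P → QMLO P
  | .tt => .tt
  | .pred p t => .pred p (tscale t)
  | .lt t₁ t₂ => .lt (tscale t₁) (tscale t₂)
  | .and φ ψ => .and (φ.scale r) (ψ.scale r)
  | .not φ => .not (φ.scale r)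
  | .ex x φ => .ex x (φ.scale r)
where
  /-- scaling of terms -/
  tscale : QTerm → QTerm
  | .var x => .var x
  | .add t q => .add (tscale t) (r * q)

end QMLO

/-- `Bet t₁ t₂ B φ` expresses that `φ` belongs to the class `Bet(t₁,t₂)`,
where `B` is the ambient set of bound variables: every quantified subformula
has the form `∃z ((t₁ ≤ z < t₂) ∧ χ)` (with `t₁ ≤ z` rendered as
`¬(z < t₁)`), and every atomic subformula `P(t)` has `t` a bound occurrence
of a variable. -/
inductive Bet {P : Type*} (t₁ t₂ : QTerm) : Set ℕ → QMLO P → Prop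
  | tt {B} : Bet t₁ t₂ B .tt
  | pred {B} (p : P) (z : ℕ) (h : z ∈ B) : Bet t₁ t₂ B (.pred p (.var z))
  | lt {B} (s₁ s₂ : QTerm) : Bet t₁ t₂ B (.lt s₁ s₂)
  | and {B φ ψ} : Bet t₁ t₂ B φ → Bet t₁ t₂ B ψ → Bet t₁ t₂ B (.and φ ψ)
  | not {B φ} : Bet t₁ t₂ B φ → Bet t₁ t₂ B (.not φ)
  | ex {B φ} (z : ℕ) :
      Bet t₁ t₂ (B ∪ {z}) φ →
      Bet t₁ t₂ B (.ex z (.and (.and (.not (.lt (.var z) t₁)) (.lt (.var z) t₂)) φ))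
section
variable {P : Type*}

lemma pbox_inf_sat (φ : MTL P) (f : ℝ → Set P) (r : ℝ) :
    (MTL.pbox ivInf φ).sat f r ↔ ∀ s, s < r → φ.sat f s := by
  simp only [MTL.pbox, MTL.pdia, MTL.sat, MTLIv.mem, ivInf]
  constructor
  · intro h s hs
    by_contra hns
    exact h ⟨s, hs, ⟨by linarith, by simpa using sub_pos.2 hs, by simp⟩, hns, fun _ _ _ => trivial⟩
  · rintro h ⟨t, ht, _, hnφ, _⟩
    exact hnφ (h t ht)

lemma pbox_lt_sat (φ : MTL P) (q : ℚ≥0) (f : ℝ → Set P) (r : ℝ) :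
    (MTL.pbox (ivLT q) φ).sat f r ↔ ∀ s, r - q < s → s < r → φ.sat f s := by
  simp only [MTL.pbox, MTL.pdia, MTL.sat, MTLIv.mem, ivLT]
  constructor
  · intro h s hsq hs
    by_contra hns
    refine h ⟨s, hs, ⟨by linarith, by simpa using sub_pos.2 hs, ?_⟩, hns, fun _ _ _ => trivial⟩
    intro q' hq'
    have : (q : WithTop ℚ≥0) = q' := hq'
    have hqq : q = q' := by exact_mod_cast this
    subst hqq
    simp only [Bool.false_eq_true, if_false]
    linarith
  · rintro h ⟨t, ht, ⟨_, _, hhi⟩, hnφ, _⟩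
    have := hhi q rfl
    simp only [Bool.false_eq_true, if_false] at this
    exact hnφ (h t (by linarith) ht)
end

section
variable {P : Type*}

lemma ivLT_mem_iff (q : ℚ≥0) (t : ℝ) : (ivLT q).mem t ↔ 0 < t ∧ t < (q : ℝ) := by
  simp only [MTLIv.mem, ivLT, Bool.false_eq_true, if_false]
  constructor
  · rintro ⟨h1, _, h3⟩
    exact ⟨h1, h3 q rfl⟩
  · rintro ⟨h1, h2⟩
    refine ⟨h1, by simpa using h1, ?_⟩
    intro q' hq'
    have hqq : q = q' := by exact_mod_cast hq'
    subst hqq; exact h2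

end

/-- `θ U_{(0,q)} (■ φ ∧ χ) ↔
(θ U_{(0,q)} (■_{(0,q)} φ ∧ χ)) ∧ ■ φ`. -/
theorem until_extract_pbox {P : Type*} [Countable P] (φ χ θ : MTL P)
    (q : ℚ≥0) (hq : 0 < q) :
    MTL.Equiv
      (.until (ivLT q) θ (.and (MTL.pbox ivInf φ) χ))
      (.and (.until (ivLT q) θ (.and (MTL.pbox (ivLT q) φ) χ))
            (MTL.pbox ivInf φ)) := by

  intro f r
  show (∃ t, r < t ∧ _ ∧ ((MTL.pbox ivInf φ).sat f t ∧ χ.sat f t) ∧ _) ↔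
    (∃ t, r < t ∧ _ ∧ ((MTL.pbox (ivLT q) φ).sat f t ∧ χ.sat f t) ∧ _) ∧ (MTL.pbox ivInf φ).sat f r
  constructor
  · rintro ⟨t, htr, hmem, ⟨hbox, hχ⟩, hθ⟩
    rw [pbox_inf_sat] at hbox
    exact ⟨⟨t, htr, hmem, ⟨(pbox_lt_sat ..).2 fun s _ hs => hbox s hs, hχ⟩, hθ⟩,
      (pbox_inf_sat ..).2 fun s hs => hbox s (lt_trans hs htr)⟩
  · rintro ⟨⟨t, htr, hmem, ⟨hbox, hχ⟩, hθ⟩, hboxr⟩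
    rw [pbox_lt_sat] at hbox
    rw [pbox_inf_sat] at hboxr
    refine ⟨t, htr, hmem, ⟨(pbox_inf_sat ..).2 fun s hs => ?_, hχ⟩, hθ⟩
    rcases lt_or_ge s r with h | h
    · exact hboxr s h
    · have hm := (ivLT_mem_iff ..).1 hmem
      exact hbox s (by linarith [hm.2]) hs
end

section
/- For all MTL formulas φ, ψ and every rational N > 0, the following equivalence holds over all signals: φ U ψ ↔ (φ U_{(0,N)} ψ) ∨ (□_{(0,N)} φ ∧ ◇_{={N}} (ψ ∨ (φ ∧ (φ U ψ)))). -/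
open scoped NNRat

/-! A witness of `φ U ψ` at `r` lies before, at, or after any later point `s`; in the last
case `φ` holds on `(r, s]` and the same witness shows `φ U ψ` at `s`. Taking `s = r + N`
gives the three disjuncts of the right-hand side. -/

namespace MTLIv

@[simp]
lemma mem_ivInf (t : ℝ) : ivInf.mem t ↔ 0 < t := by
  simp [mem, ivInf]

@[simp]
lemma mem_ivLT (q : ℚ≥0) (t : ℝ) : (ivLT q).mem t ↔ 0 < t ∧ t < q := by
  simp [mem, ivLT]

lemma mem_ivEQ {q : ℚ≥0} (hq : 0 < q) (t : ℝ) : (ivEQ q).mem t ↔ t = q := by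
  have hq' : (0 : ℝ) < q := by exact_mod_cast hq
  simp only [mem, ivEQ, if_true, WithTop.coe_inj, forall_eq']
  constructor
  · rintro ⟨-, hle, hge⟩
    exact le_antisymm hge hle
  · rintro rfl
    exact ⟨hq', le_rfl, le_rfl⟩

end MTLIv

namespace MTL

variable {P : Type*} (f : ℝ → Set P)

@[simp]
lemma sat_or (φ ψ : MTL P) (r : ℝ) : (φ.or ψ).sat f r ↔ φ.sat f r ∨ ψ.sat f r := by
  simp only [MTL.or, sat]
  tauto

@[simp]
lemma sat_dia (I : MTLIv) (φ : MTL P) (r : ℝ) :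
    (dia I φ).sat f r ↔ ∃ t, r < t ∧ I.mem (t - r) ∧ φ.sat f t := by
  simp [dia, sat]

@[simp]
lemma sat_box (I : MTLIv) (φ : MTL P) (r : ℝ) :
    (box I φ).sat f r ↔ ∀ t, r < t → I.mem (t - r) → φ.sat f t := by
  simp [box, sat]

lemma sat_until_ivInf (φ ψ : MTL P) (r : ℝ) :
    (MTL.until ivInf φ ψ).sat f r ↔
      ∃ t, r < t ∧ ψ.sat f t ∧ ∀ u, r < u → u < t → φ.sat f u := by
  simp [sat]

lemma sat_until_ivInf_iff_split (φ ψ : MTL P) {r s : ℝ} (hrs : r < s) :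
    (MTL.until ivInf φ ψ).sat f r ↔
      (∃ t, r < t ∧ t < s ∧ ψ.sat f t ∧ ∀ u, r < u → u < t → φ.sat f u) ∨
      ((∀ u, r < u → u < s → φ.sat f u) ∧
        (ψ.sat f s ∨ φ.sat f s ∧ (MTL.until ivInf φ ψ).sat f s)) := by
  simp only [sat_until_ivInf]
  constructor
  · rintro ⟨t, hrt, hψ, hφ⟩
    rcases lt_trichotomy t s with hts | rfl | hst
    · exact .inl ⟨t, hrt, hts, hψ, hφ⟩
    · exact .inr ⟨hφ, .inl hψ⟩
    · exact .inr ⟨fun u hru hus => hφ u hru (hus.trans hst), .inr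
        ⟨hφ s hrs hst, t, hst, hψ, fun u hsu hut => hφ u (hrs.trans hsu) hut⟩⟩
  · rintro (⟨t, hrt, -, hψ, hφ⟩ | ⟨hφ, hψs | ⟨hφs, t, hst, hψ, hφ'⟩⟩)
    · exact ⟨t, hrt, hψ, hφ⟩
    · exact ⟨s, hrs, hψs, hφ⟩
    · refine ⟨t, hrs.trans hst, hψ, fun u hru hut => ?_⟩
      rcases lt_trichotomy u s with hus | rfl | hsu
      · exact hφ u hru hus
      · exact hφs
      · exact hφ' u hsu hut

end MTL

theorem until_split_at_N_general {P : Type*} (φ ψ : MTL P)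
    (N : ℚ≥0) (hN : 0 < N) :
    MTL.Equiv
      (.until ivInf φ ψ)
      (MTL.or
        (.until (ivLT N) φ ψ)
        (.and (MTL.box (ivLT N) φ)
          (MTL.dia (ivEQ N) (MTL.or ψ (.and φ (.until ivInf φ ψ)))))) := by
  intro f r
  have hN' : (0 : ℝ) < N := by exact_mod_cast hN
  rw [MTL.sat_until_ivInf_iff_split f φ ψ (lt_add_of_pos_right r hN')]
  simp [MTL.sat, MTLIv.mem_ivEQ hN, sub_eq_iff_eq_add', sub_lt_iff_lt_add', hN', and_assoc]

/-- `φ U ψ ↔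
(φ U_{(0,N)} ψ) ∨ (□_{(0,N)} φ ∧ ◇_{=N} (ψ ∨ (φ ∧ (φ U ψ))))`. -/
theorem until_split_at_N {P : Type*} [Countable P] (φ ψ : MTL P)
    (N : ℚ≥0) (hN : 0 < N) :
    MTL.Equiv
      (.until ivInf φ ψ)
      (MTL.or
        (.until (ivLT N) φ ψ)
        (.and (MTL.box (ivLT N) φ)
          (MTL.dia (ivEQ N) (MTL.or ψ (.and φ (.until ivInf φ ψ)))))) :=
  until_split_at_N_general φ ψ N hN
end

section
/- Define K⁺φ := ¬((¬φ) U true), so that f,r ⊨ K⁺φ iff φ is true at points arbitrarily close to r in the future. Then for all MTL formulas φ, ψ, the following equivalence holds over all signals: ¬(φ U ψ) ↔ □¬ψ ∨ K⁺(¬φ) ∨ ((¬ψ) U (¬ψ ∧ (¬φ ∨ K⁺(¬φ)))). -/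
open scoped NNRat

lemma ivInf_mem (t : ℝ) : ivInf.mem t ↔ 0 < t := by
  simp [MTLIv.mem, ivInf]

lemma key_fwd (A B : ℝ → Prop) (r : ℝ)
    (H : ∀ t, r < t → B t → ∃ u, r < u ∧ u < t ∧ ¬A u)
    (h1 : ∃ t, r < t ∧ B t)
    (h2 : ∃ t, r < t ∧ ∀ u, r < u → u < t → A u) :
    ∃ t, r < t ∧ ¬B t ∧ (A t → ∀ s, t < s → ∃ u, t < u ∧ u < s ∧ ¬A u) ∧
      ∀ u, r < u → u < t → ¬B u := by
  obtain ⟨t₀, hrt₀, hB₀⟩ := h1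
  obtain ⟨t₁, hrt₁, hA₁⟩ := h2
  set S : Set ℝ := {t | r < t ∧ ∀ u, r < u → u < t → A u} with hS
  have ht₁S : t₁ ∈ S := ⟨hrt₁, hA₁⟩
  have hbdd : BddAbove S := by
    refine ⟨t₀, fun t ht => ?_⟩
    by_contra hlt
    push_neg at hlt
    obtain ⟨u, hru, hut₀, hnAu⟩ := H t₀ hrt₀ hB₀
    exact hnAu (ht.2 u hru (hut₀.trans hlt))
  set c := sSup S with hc
  have hrc : r < c := lt_of_lt_of_le hrt₁ (le_csSup hbdd ht₁S)
  have hAc : ∀ u, r < u → u < c → A u := by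
    intro u hru huc
    obtain ⟨t, htS, hut⟩ := exists_lt_of_lt_csSup ⟨t₁, ht₁S⟩ huc
    exact htS.2 u hru hut
  have hnB : ∀ t, r < t → t ≤ c → ¬B t := by
    intro t hrt htc hBt
    obtain ⟨u, hru, hut, hnAu⟩ := H t hrt hBt
    exact hnAu (hAc u hru (lt_of_lt_of_le hut htc))
  refine ⟨c, hrc, hnB c hrc le_rfl, ?_, fun u hru huc => hnB u hru huc.le⟩
  intro hAcc s hcs
  by_contra hno
  push_neg at hno
  have hsS : s ∈ S := by
    refine ⟨hrc.trans hcs, fun u hru hus => ?_⟩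
    rcases lt_trichotomy u c with h | h | h
    · exact hAc u hru h
    · exact h ▸ hAcc
    · exact hno u h hus
  exact absurd (le_csSup hbdd hsS) (not_le.mpr hcs)

/-- with `K⁺φ := ¬((¬φ) U true)`,
`¬(φ U ψ) ↔ □¬ψ ∨ K⁺(¬φ) ∨ ((¬ψ) U (¬ψ ∧ (¬φ ∨ K⁺(¬φ))))`. -/
theorem negated_until {P : Type*} [Countable P] (φ ψ : MTL P) :
    MTL.Equiv
      (.not (.until ivInf φ ψ))
      (MTL.or (MTL.box ivInf (.not ψ))
        (MTL.or (MTL.kplus (.not φ))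
          (.until ivInf (.not ψ)
            (.and (.not ψ)
              (MTL.or (.not φ) (MTL.kplus (.not φ))))))) := by
  intro f r
  simp only [MTL.sat, MTL.or, MTL.box, MTL.dia, MTL.kplus, ivInf_mem, sub_pos,
    not_and, not_not, not_exists, not_or, not_forall, true_and, and_true, and_self,
    exists_prop, exists_and_left, and_imp, imp_self, implies_true]
  constructor
  · intro H h1 h2
    obtain ⟨t, hrt, hnB, hK, hB⟩ := key_fwd (MTL.sat f φ) (MTL.sat f ψ) r
      (fun t ht hB => H t ht ht hB)
      (by obtain ⟨x, hx, _, hb⟩ := h1; exact ⟨x, hx, hb⟩)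
      (by obtain ⟨x, hx, _, ha⟩ := h2; exact ⟨x, hx, ha⟩)
    exact ⟨t, hrt, hrt, hnB, fun hA s hts _ => hK hA s hts, hB⟩
  · intro H t hrt _ hBt
    by_contra hno
    push_neg at hno
    obtain ⟨c, hrc, -, hnBc, hK, hB⟩ := H ⟨t, hrt, hrt, hBt⟩ ⟨t, hrt, hrt, hno⟩
    have htc : c < t := by
      rcases lt_trichotomy t c with h | h | h
      · exact absurd hBt (hB t hrt h)
      · exact absurd hBt (h ▸ hnBc)
      · exact h
    have hAc : MTL.sat f φ c := hno c hrc htc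
    obtain ⟨u, hcu, hut, hnAu⟩ := hK hAc t htc htc
    exact hnAu (hno u (hrc.trans hcu) hut)
end
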